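/- arXiv:1308.5420 — 2 statements merged into one kernel-verified Lean document; each statement's English description precedes it below -/
import Mathlib

section
/- f(5) = 8: the 5×5 square admits a prime dissection into exactly 8 integer-sided squares, and admits no prime dissection into fewer than 8 squares. -/
/-- The closed square with lower-left corner `(q.1, q.2.1)` and side `q.2.2`,
as a subset of the plane. -/
def closedSq (q : ℕ × ℕ × ℕ) : Set (ℝ × ℝ) :=
  Set.Icc (q.1 : ℝ) (q.1 + q.2.2) ×ˢ Set.Icc (q.2.1 : ℝ) (q.2.1 + q.2.2)

/-- The interior (open square) of the placed square `q`. -/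
def openSq (q : ℕ × ℕ × ℕ) : Set (ℝ × ℝ) :=
  Set.Ioo (q.1 : ℝ) (q.1 + q.2.2) ×ˢ Set.Ioo (q.2.1 : ℝ) (q.2.1 + q.2.2)

/-- `D` is a dissection of the `n × n` square: a finite family of axis-aligned
squares with positive integer side lengths and integer lower-left corners, whose
interiors are pairwise disjoint and whose union is `[0,n] × [0,n]`.  Its order is
`D.card`. -/
def IsDissection (n : ℕ) (D : Finset (ℕ × ℕ × ℕ)) : Prop :=
  (∀ q ∈ D, 0 < q.2.2) ∧
  (⋃ q ∈ D, closedSq q) = Set.Icc (0 : ℝ) (n : ℝ) ×ˢ Set.Icc (0 : ℝ) (n : ℝ) ∧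
  (∀ q ∈ D, ∀ q' ∈ D, q ≠ q' → openSq q ∩ openSq q' = ∅)

/-- A dissection is prime if the gcd of the side lengths of its squares is 1. -/
def IsPrimeDissection (n : ℕ) (D : Finset (ℕ × ℕ × ℕ)) : Prop :=
  IsDissection n D ∧ D.gcd (fun q => q.2.2) = 1


def sqP (x y s p : ℕ) : Bool :=
  decide (x ≤ p % 5) && decide (p % 5 < x + s) && decide (y ≤ p / 5) && decide (p / 5 < y + s)

def sqMask (x y s : ℕ) : ℕ :=
  ((((1 <<< s) - 1) <<< x) * ((32 ^ s - 1) / 31)) <<< (5 * y)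

set_option synthInstance.maxSize 1000 in
theorem sqMask_testBit : ∀ x < 5, ∀ y < 5, ∀ s < 5, ∀ p < 25,
    x + s ≤ 5 → y + s ≤ 5 → (sqMask x y s).testBit p = sqP x y s p := by decide

set_option synthInstance.maxSize 1000 in
theorem sqMask_lt : ∀ x < 5, ∀ y < 5, ∀ s < 5,
    x + s ≤ 5 → y + s ≤ 5 → sqMask x y s < 2 ^ 25 := by decide

def minBitAux (m : ℕ) : ℕ → ℕ → ℕ
  | p, 0 => p
  | p, f+1 => if m.testBit p then p else minBitAux m (p+1) f

def minBit (m : ℕ) : ℕ := minBitAux m 0 25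

theorem minBitAux_spec (m : ℕ) : ∀ f p, (∃ r, p ≤ r ∧ r < p + f ∧ m.testBit r = true) →
    m.testBit (minBitAux m p f) = true ∧
    ∀ r < minBitAux m p f, m.testBit r = false ∨ r < p := by
  intro f
  induction f with
  | zero => rintro p ⟨r, h1, h2, _⟩; omega
  | succ f ih =>
    rintro p ⟨r, h1, h2, h3⟩
    by_cases hp : m.testBit p = true
    · simp only [minBitAux]; rw [if_pos hp]
      exact ⟨hp, fun r hr => Or.inr hr⟩
    · simp only [minBitAux]; rw [if_neg hp]
      have hrp : r ≠ p := fun h => hp (h ▸ h3)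
      obtain ⟨a, b⟩ := ih (p+1) ⟨r, by omega, by omega, h3⟩
      refine ⟨a, fun r' hr' => ?_⟩
      rcases b r' hr' with h | h
      · exact Or.inl h
      · rcases Nat.lt_or_ge r' p with h' | h'
        · exact Or.inr h'
        · have : r' = p := by omega
          subst this; exact Or.inl (by simpa using hp)

theorem minBit_spec (m : ℕ) (h : ∃ r, r < 25 ∧ m.testBit r = true) :
    m.testBit (minBit m) = true ∧ ∀ r < minBit m, m.testBit r = false := by
  obtain ⟨a, b⟩ := minBitAux_spec m 25 0 (by obtain ⟨r, h1, h2⟩ := h; exact ⟨r, by omega, by omega, h2⟩)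
  exact ⟨a, fun r hr => by rcases b r hr with h | h; exact h; omega⟩

def canTile : ℕ → ℕ → ℕ → Bool
  | 0, m, g => m == 0 && g == 1
  | k+1, m, g =>
    if m == 0 then g == 1 else
      (List.range 4).any fun t =>
        let p := minBit m
        let s := t+1
        decide (p % 5 + s ≤ 5) && decide (p / 5 + s ≤ 5) &&
        (m &&& sqMask (p % 5) (p / 5) s == sqMask (p % 5) (p / 5) s) &&
        canTile k (m ^^^ sqMask (p % 5) (p / 5) s) (Nat.gcd g s)

theorem canTile_seven : canTile 7 (2^25 - 1) 0 = false := by decide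
theorem canTile_correct : ∀ (k : ℕ) (D : Finset (ℕ × ℕ × ℕ)) (m g : ℕ),
    (∀ q ∈ D, q.1 + q.2.2 ≤ 5 ∧ q.2.1 + q.2.2 ≤ 5 ∧ 0 < q.2.2 ∧ q.2.2 < 5) →
    (∀ p : ℕ, m.testBit p = true ↔ ∃ q ∈ D, (sqMask q.1 q.2.1 q.2.2).testBit p = true) →
    (∀ q ∈ D, ∀ q' ∈ D, q ≠ q' → ∀ p : ℕ, (sqMask q.1 q.2.1 q.2.2).testBit p = true →
      (sqMask q'.1 q'.2.1 q'.2.2).testBit p = true → False) →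
    D.card ≤ k →
    Nat.gcd g (D.gcd (fun q => q.2.2)) = 1 →
    canTile k m g = true := by
  intro k
  induction k with
  | zero =>
    intro D m g hfit hchar hdisj hcard hgcd
    have hD : D = ∅ := Finset.card_eq_zero.mp (Nat.le_zero.mp hcard)
    subst hD
    have hm : m = 0 := Nat.eq_of_testBit_eq fun i => by
      simp only [Nat.zero_testBit]
      rw [← Bool.not_eq_true]
      intro h
      obtain ⟨q, hq, -⟩ := (hchar i).mp h
      exact absurd hq (Finset.notMem_empty q)
    subst hm
    simp only [Finset.gcd_empty, Nat.gcd_zero_right] at hgcd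
    simp [canTile, hgcd]
  | succ k ih =>
    intro D m g hfit hchar hdisj hcard hgcd
    rcases eq_or_ne D ∅ with hD | hD
    · subst hD
      have hm : m = 0 := Nat.eq_of_testBit_eq fun i => by
        simp only [Nat.zero_testBit]
        rw [← Bool.not_eq_true]
        intro h
        obtain ⟨q, hq, -⟩ := (hchar i).mp h
        exact absurd hq (Finset.notMem_empty q)
      subst hm
      simp only [Finset.gcd_empty, Nat.gcd_zero_right] at hgcd
      simp [canTile, hgcd]
    · -- D nonempty
      obtain ⟨q1, hq1⟩ := Finset.nonempty_iff_ne_empty.mpr hD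
      obtain ⟨hx1, hy1, hs1, hs1'⟩ := hfit q1 hq1
      -- the corner bit of q1 is set in m
      have hx1' : q1.1 < 5 := by omega
      have hy1' : q1.2.1 < 5 := by omega
      have hcorner : (sqMask q1.1 q1.2.1 q1.2.2).testBit (q1.1 + 5 * q1.2.1) = true := by
        rw [sqMask_testBit q1.1 hx1' q1.2.1 hy1' q1.2.2 hs1' (q1.1 + 5 * q1.2.1) (by omega) hx1 hy1]
        simp only [sqP, Bool.and_eq_true, decide_eq_true_eq]
        refine ⟨⟨⟨?_, ?_⟩, ?_⟩, ?_⟩ <;> omega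
      have hmbit : m.testBit (q1.1 + 5 * q1.2.1) = true :=
        (hchar _).mpr ⟨q1, hq1, hcorner⟩
      have hm0 : m ≠ 0 := by
        intro h; rw [h, Nat.zero_testBit] at hmbit; exact absurd hmbit (by simp)
      obtain ⟨hmin1, hmin2⟩ := minBit_spec m ⟨q1.1 + 5 * q1.2.1, by omega, hmbit⟩
      set p := minBit m with hp
      -- find the square covering the min bit
      obtain ⟨q0, hq0, hq0bit⟩ := (hchar p).mp hmin1
      obtain ⟨hx0, hy0, hs0, hs0'⟩ := hfit q0 hq0
      have hx0' : q0.1 < 5 := by omega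
      have hy0' : q0.2.1 < 5 := by omega
      have hp25 : p < 25 := by
        by_contra h
        have hlt : sqMask q0.1 q0.2.1 q0.2.2 < 2 ^ p :=
          lt_of_lt_of_le (sqMask_lt q0.1 hx0' q0.2.1 hy0' q0.2.2 hs0' hx0 hy0)
            (Nat.pow_le_pow_right (by norm_num) (by omega))
        rw [Nat.testBit_lt_two_pow hlt] at hq0bit
        exact absurd hq0bit (by simp)
      have hcov : q0.1 ≤ p % 5 ∧ p % 5 < q0.1 + q0.2.2 ∧ q0.2.1 ≤ p / 5 ∧ p / 5 < q0.2.1 + q0.2.2 := by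
        rw [sqMask_testBit q0.1 hx0' q0.2.1 hy0' q0.2.2 hs0' p hp25 hx0 hy0] at hq0bit
        simp only [sqP, Bool.and_eq_true, decide_eq_true_eq] at hq0bit
        tauto
      -- corner bit of q0 is set in m and ≤ p, hence = p
      have hc0 : (sqMask q0.1 q0.2.1 q0.2.2).testBit (q0.1 + 5 * q0.2.1) = true := by
        rw [sqMask_testBit q0.1 hx0' q0.2.1 hy0' q0.2.2 hs0' (q0.1 + 5 * q0.2.1) (by omega) hx0 hy0]
        simp only [sqP, Bool.and_eq_true, decide_eq_true_eq]
        refine ⟨⟨⟨?_, ?_⟩, ?_⟩, ?_⟩ <;> omega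
      have hc0m : m.testBit (q0.1 + 5 * q0.2.1) = true := (hchar _).mpr ⟨q0, hq0, hc0⟩
      have hcorner_eq : q0.1 + 5 * q0.2.1 = p := by
        have hle : ¬ (q0.1 + 5 * q0.2.1 < p) := by
          intro h
          rw [hmin2 _ h] at hc0m
          exact absurd hc0m (by simp)
        omega
      have hxp : q0.1 = p % 5 := by omega
      have hyp : q0.2.1 = p / 5 := by omega
      -- now build the witness for the `any`
      cases' Nat.eq_zero_or_pos D.card with hc hc
      · exact absurd (Finset.card_eq_zero.mp hc) hD
      simp only [canTile]
      rw [if_neg (by simpa using hm0)]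
      rw [List.any_eq_true]
      refine ⟨q0.2.2 - 1, List.mem_range.mpr (by omega), ?_⟩
      have hseq : q0.2.2 - 1 + 1 = q0.2.2 := by omega
      simp only [← hp, hseq, Bool.and_eq_true, decide_eq_true_eq, beq_iff_eq]
      refine ⟨⟨⟨by omega, by omega⟩, ?_⟩, ?_⟩
      · -- m &&& sq = sq
        rw [← hxp, ← hyp]
        apply Nat.eq_of_testBit_eq
        intro b
        rw [Nat.testBit_and]
        cases hb : (sqMask q0.1 q0.2.1 q0.2.2).testBit b
        · simp
        · simp only [Bool.and_true]
          exact (hchar b).mpr ⟨q0, hq0, hb⟩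
      · -- recursive call
        rw [← hxp, ← hyp]
        apply ih (D.erase q0)
        · intro q hq; exact hfit q (Finset.mem_of_mem_erase hq)
        · intro b
          rw [Nat.testBit_xor]
          cases hb : (sqMask q0.1 q0.2.1 q0.2.2).testBit b
          · simp only [Bool.xor_false]
            constructor
            · intro h
              obtain ⟨q, hq, hqb⟩ := (hchar b).mp h
              have : q ≠ q0 := by rintro rfl; rw [hqb] at hb; exact absurd hb (by simp)
              exact ⟨q, Finset.mem_erase.mpr ⟨this, hq⟩, hqb⟩
            · rintro ⟨q, hq, hqb⟩
              exact (hchar b).mpr ⟨q, Finset.mem_of_mem_erase hq, hqb⟩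
          · have hmb : m.testBit b = true := (hchar b).mpr ⟨q0, hq0, hb⟩
            rw [hmb]
            simp only [Bool.true_xor, Bool.not_true, Bool.false_eq_true, false_iff]
            rintro ⟨q, hq, hqb⟩
            have hne : q ≠ q0 := (Finset.mem_erase.mp hq).1
            exact hdisj q (Finset.mem_of_mem_erase hq) q0 hq0 hne b hqb hb
        · intro q hq q' hq' hne
          exact hdisj q (Finset.mem_of_mem_erase hq) q' (Finset.mem_of_mem_erase hq') hne
        · rw [Finset.card_erase_of_mem hq0]; omega
        · have : D.gcd (fun q => q.2.2) = Nat.gcd q0.2.2 ((D.erase q0).gcd (fun q => q.2.2)) := by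
            conv_lhs => rw [← Finset.insert_erase hq0]
            rw [Finset.gcd_insert]
            rfl
          rw [this] at hgcd
          rw [Nat.gcd_assoc]
          exact hgcd
lemma dissect_bounds {D : Finset (ℕ × ℕ × ℕ)} (h : IsDissection 5 D) :
    ∀ q ∈ D, q.1 + q.2.2 ≤ 5 ∧ q.2.1 + q.2.2 ≤ 5 := by
  obtain ⟨-, hcov, -⟩ := h
  intro q hq
  have hsub : closedSq q ⊆ Set.Icc (0:ℝ) ((5:ℕ):ℝ) ×ˢ Set.Icc (0:ℝ) ((5:ℕ):ℝ) := by
    rw [← hcov]; exact Set.subset_biUnion_of_mem hq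
  have hmem : (((q.1:ℝ) + q.2.2), ((q.2.1:ℝ) + q.2.2)) ∈ closedSq q := by
    constructor <;>
      exact Set.right_mem_Icc.mpr (le_add_of_nonneg_right (Nat.cast_nonneg _))
  obtain ⟨⟨-, h1⟩, -, h2⟩ := hsub hmem
  replace h1 : (q.1:ℝ) + q.2.2 ≤ ((5:ℕ):ℝ) := h1
  replace h2 : (q.2.1:ℝ) + q.2.2 ≤ ((5:ℕ):ℝ) := h2
  exact ⟨by exact_mod_cast h1, by exact_mod_cast h2⟩

lemma covers_exists {D : Finset (ℕ × ℕ × ℕ)} (h : IsDissection 5 D)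
    {i j : ℕ} (hi : i < 5) (hj : j < 5) :
    ∃ q ∈ D, q.1 ≤ i ∧ i < q.1 + q.2.2 ∧ q.2.1 ≤ j ∧ j < q.2.1 + q.2.2 := by
  obtain ⟨-, hcov, -⟩ := h
  have hpt : ((i:ℝ) + 1/2, (j:ℝ) + 1/2) ∈ Set.Icc (0:ℝ) ((5:ℕ):ℝ) ×ˢ Set.Icc (0:ℝ) ((5:ℕ):ℝ) := by
    have hi' : (i:ℝ) ≤ 4 := by exact_mod_cast Nat.lt_succ_iff.mp hi
    have hj' : (j:ℝ) ≤ 4 := by exact_mod_cast Nat.lt_succ_iff.mp hj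
    have : ((5:ℕ):ℝ) = 5 := by norm_num
    rw [this]
    exact ⟨⟨by positivity, by linarith⟩, by positivity, by linarith⟩
  rw [← hcov] at hpt
  simp only [Set.mem_iUnion, exists_prop] at hpt
  obtain ⟨q, hq, hmem⟩ := hpt
  obtain ⟨⟨h1, h2⟩, h3, h4⟩ := hmem
  refine ⟨q, hq, ?_, ?_, ?_, ?_⟩
  · have : (q.1:ℝ) < i + 1 := by linarith
    have : q.1 < i + 1 := by exact_mod_cast this
    omega
  · have : (i:ℝ) < q.1 + q.2.2 := by linarith
    have : (i:ℝ) < ((q.1 + q.2.2 : ℕ) : ℝ) := by push_cast; linarith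
    exact_mod_cast this
  · have : (q.2.1:ℝ) < j + 1 := by linarith
    have : q.2.1 < j + 1 := by exact_mod_cast this
    omega
  · have : (j:ℝ) < ((q.2.1 + q.2.2 : ℕ) : ℝ) := by push_cast; linarith
    exact_mod_cast this

lemma covers_unique {D : Finset (ℕ × ℕ × ℕ)} (h : IsDissection 5 D)
    {i j : ℕ} {q q' : ℕ × ℕ × ℕ} (hq : q ∈ D) (hq' : q' ∈ D)
    (hc : q.1 ≤ i ∧ i < q.1 + q.2.2 ∧ q.2.1 ≤ j ∧ j < q.2.1 + q.2.2)
    (hc' : q'.1 ≤ i ∧ i < q'.1 + q'.2.2 ∧ q'.2.1 ≤ j ∧ j < q'.2.1 + q'.2.2) :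
    q = q' := by
  obtain ⟨-, -, hdisj⟩ := h
  by_contra hne
  have hmid : ∀ {r : ℕ × ℕ × ℕ}, r.1 ≤ i → i < r.1 + r.2.2 → r.2.1 ≤ j → j < r.2.1 + r.2.2 →
      ((i:ℝ) + 1/2, (j:ℝ) + 1/2) ∈ openSq r := by
    intro r h1 h2 h3 h4
    have c1 : (r.1:ℝ) ≤ i := by exact_mod_cast h1
    have c2 : (i:ℝ) + 1 ≤ ((r.1 + r.2.2 : ℕ):ℝ) := by exact_mod_cast h2
    have c3 : (r.2.1:ℝ) ≤ j := by exact_mod_cast h3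
    have c4 : (j:ℝ) + 1 ≤ ((r.2.1 + r.2.2 : ℕ):ℝ) := by exact_mod_cast h4
    push_cast at c2 c4
    exact ⟨⟨by linarith, by linarith⟩, by linarith, by linarith⟩
  have := hdisj q hq q' hq' hne
  have hm : ((i:ℝ) + 1/2, (j:ℝ) + 1/2) ∈ openSq q ∩ openSq q' :=
    ⟨hmid hc.1 hc.2.1 hc.2.2.1 hc.2.2.2, hmid hc'.1 hc'.2.1 hc'.2.2.1 hc'.2.2.2⟩
  rw [this] at hm
  exact hm

lemma side_lt_five {D : Finset (ℕ × ℕ × ℕ)} (h : IsPrimeDissection 5 D) :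
    ∀ q ∈ D, q.2.2 < 5 := by
  obtain ⟨hd, hgcd⟩ := h
  intro q hq
  by_contra hs
  push_neg at hs
  obtain ⟨hx, hy⟩ := dissect_bounds hd q hq
  have hx0 : q.1 = 0 := by omega
  have hy0 : q.2.1 = 0 := by omega
  have hs5 : q.2.2 = 5 := by omega
  have hall : ∀ q' ∈ D, q' = q := by
    intro q' hq'
    have hpos := hd.1 q' hq'
    obtain ⟨hx', hy'⟩ := dissect_bounds hd q' hq'
    refine covers_unique hd hq' hq ⟨le_refl _, by omega, le_refl _, by omega⟩ ?_
    refine ⟨by omega, by omega, by omega, by omega⟩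
  have hsing : D = {q} := by
    apply Finset.eq_singleton_iff_unique_mem.mpr ⟨hq, hall⟩
  rw [hsing, Finset.gcd_singleton] at hgcd
  have : q.2.2 = 1 := by
    have hn : normalize q.2.2 = q.2.2 := normalize_eq _
    rw [hn] at hgcd; exact hgcd
  omega

theorem lower_bound {D : Finset (ℕ × ℕ × ℕ)} (h : IsPrimeDissection 5 D) : 8 ≤ D.card := by
  by_contra hcard
  push_neg at hcard
  obtain ⟨hd, hgcd⟩ := h
  have hfit : ∀ q ∈ D, q.1 + q.2.2 ≤ 5 ∧ q.2.1 + q.2.2 ≤ 5 ∧ 0 < q.2.2 ∧ q.2.2 < 5 := by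
    intro q hq
    obtain ⟨h1, h2⟩ := dissect_bounds hd q hq
    exact ⟨h1, h2, hd.1 q hq, side_lt_five ⟨hd, hgcd⟩ q hq⟩
  have hbit : ∀ q ∈ D, ∀ p : ℕ, (sqMask q.1 q.2.1 q.2.2).testBit p = true →
      p < 25 ∧ q.1 ≤ p % 5 ∧ p % 5 < q.1 + q.2.2 ∧ q.2.1 ≤ p / 5 ∧ p / 5 < q.2.1 + q.2.2 := by
    intro q hq p hp
    obtain ⟨h1, h2, h3, h4⟩ := hfit q hq
    have hx5 : q.1 < 5 := by omega
    have hy5 : q.2.1 < 5 := by omega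
    have hp25 : p < 25 := by
      by_contra hc
      have hlt : sqMask q.1 q.2.1 q.2.2 < 2 ^ p :=
        lt_of_lt_of_le (sqMask_lt q.1 hx5 q.2.1 hy5 q.2.2 h4 h1 h2)
          (Nat.pow_le_pow_right (by norm_num) (by omega))
      rw [Nat.testBit_lt_two_pow hlt] at hp
      exact absurd hp (by simp)
    rw [sqMask_testBit q.1 hx5 q.2.1 hy5 q.2.2 h4 p hp25 h1 h2] at hp
    simp only [sqP, Bool.and_eq_true, decide_eq_true_eq] at hp
    exact ⟨hp25, by tauto, by tauto, by tauto, by tauto⟩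
  have hchar : ∀ p : ℕ, (2^25 - 1 : ℕ).testBit p = true ↔
      ∃ q ∈ D, (sqMask q.1 q.2.1 q.2.2).testBit p = true := by
    intro p
    by_cases hp : p < 25
    · rw [Nat.testBit_two_pow_sub_one]
      refine Iff.intro (fun _ => ?_) (fun _ => decide_eq_true hp)
      obtain ⟨q, hq, hc⟩ := covers_exists hd (i := p % 5) (j := p / 5) (by omega) (by omega)
      obtain ⟨h1, h2, h3, h4⟩ := hfit q hq
      refine ⟨q, hq, ?_⟩
      rw [sqMask_testBit q.1 (by omega) q.2.1 (by omega) q.2.2 h4 p hp h1 h2]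
      simp only [sqP, Bool.and_eq_true, decide_eq_true_eq]
      exact ⟨⟨⟨hc.1, hc.2.1⟩, hc.2.2.1⟩, hc.2.2.2⟩
    · rw [Nat.testBit_two_pow_sub_one]
      constructor
      · intro hfalse; exact absurd (of_decide_eq_true hfalse) hp
      · rintro ⟨q, hq, hqb⟩; exact absurd (hbit q hq p hqb).1 hp
  have hdisj : ∀ q ∈ D, ∀ q' ∈ D, q ≠ q' → ∀ p : ℕ,
      (sqMask q.1 q.2.1 q.2.2).testBit p = true →
      (sqMask q'.1 q'.2.1 q'.2.2).testBit p = true → False := by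
    intro q hq q' hq' hne p hb hb'
    obtain ⟨-, hcv⟩ := hbit q hq p hb
    obtain ⟨-, hcv'⟩ := hbit q' hq' p hb'
    exact hne (covers_unique hd hq hq' hcv hcv')
  have := canTile_correct 7 D (2^25 - 1) 0 hfit hchar hdisj (by omega)
    (by rw [Nat.gcd_zero_left]; exact hgcd)
  rw [canTile_seven] at this
  exact absurd this (by simp)
def D8 : Finset (ℕ × ℕ × ℕ) :=
  {(0,0,2), (2,0,2), (4,0,1), (4,1,1), (0,2,3), (3,2,1), (4,2,1), (3,3,2)}

lemma disjX {q q' : ℕ × ℕ × ℕ} (h : q.1 + q.2.2 ≤ q'.1) : openSq q ∩ openSq q' = ∅ := by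
  rw [Set.eq_empty_iff_forall_notMem]
  rintro ⟨a, b⟩ ⟨⟨⟨-, h1⟩, -⟩, ⟨h2, -⟩, -⟩
  have hc : ((q.1 + q.2.2 : ℕ) : ℝ) ≤ (q'.1 : ℝ) := by exact_mod_cast h
  push_cast at hc
  simp only at h1 h2
  linarith

lemma disjY {q q' : ℕ × ℕ × ℕ} (h : q.2.1 + q.2.2 ≤ q'.2.1) : openSq q ∩ openSq q' = ∅ := by
  rw [Set.eq_empty_iff_forall_notMem]
  rintro ⟨a, b⟩ ⟨⟨-, ⟨-, h1⟩⟩, -, h2, -⟩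
  have hc : ((q.2.1 + q.2.2 : ℕ) : ℝ) ≤ (q'.2.1 : ℝ) := by exact_mod_cast h
  push_cast at hc
  simp only at h1 h2
  linarith

lemma disjX' {q q' : ℕ × ℕ × ℕ} (h : q'.1 + q'.2.2 ≤ q.1) : openSq q ∩ openSq q' = ∅ := by
  rw [Set.inter_comm]; exact disjX h

lemma disjY' {q q' : ℕ × ℕ × ℕ} (h : q'.2.1 + q'.2.2 ≤ q.2.1) : openSq q ∩ openSq q' = ∅ := by
  rw [Set.inter_comm]; exact disjY h

lemma D8_disjoint : ∀ q ∈ D8, ∀ q' ∈ D8, q ≠ q' → openSq q ∩ openSq q' = ∅ := by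
  intro q hq q' hq' hne
  fin_cases hq <;> fin_cases hq' <;>
    first
      | exact absurd rfl hne
      | exact disjX (by decide)
      | exact disjX' (by decide)
      | exact disjY (by decide)
      | exact disjY' (by decide)

lemma D8_cover : (⋃ q ∈ D8, closedSq q) = Set.Icc (0:ℝ) ((5:ℕ):ℝ) ×ˢ Set.Icc (0:ℝ) ((5:ℕ):ℝ) := by
  have h5 : ((5:ℕ):ℝ) = 5 := by norm_num
  rw [h5]
  ext ⟨a, b⟩
  simp only [Set.mem_iUnion, exists_prop, Set.mem_prod, Set.mem_Icc, D8, closedSq,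
    Finset.mem_insert, Finset.mem_singleton]
  constructor
  · rintro ⟨q, hq, ⟨h1, h2⟩, h3, h4⟩
    rcases hq with rfl|rfl|rfl|rfl|rfl|rfl|rfl|rfl <;> simp only at h1 h2 h3 h4 <;>
      norm_num at h1 h2 h3 h4 <;> exact ⟨⟨by linarith, by linarith⟩, by linarith, by linarith⟩
  · rintro ⟨⟨ha0, ha5⟩, hb0, hb5⟩
    rcases le_or_gt b 2 with hb | hb
    · rcases le_or_gt a 2 with ha | ha
      · exact ⟨(0,0,2), by norm_num, by norm_num; constructor <;> constructor <;> linarith⟩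
      · rcases le_or_gt a 4 with ha' | ha'
        · exact ⟨(2,0,2), by norm_num, by norm_num; constructor <;> constructor <;> linarith⟩
        · rcases le_or_gt b 1 with hb' | hb'
          · exact ⟨(4,0,1), by norm_num, by norm_num; constructor <;> constructor <;> linarith⟩
          · exact ⟨(4,1,1), by norm_num, by norm_num; constructor <;> constructor <;> linarith⟩
    · rcases le_or_gt a 3 with ha | ha
      · exact ⟨(0,2,3), by norm_num, by norm_num; constructor <;> constructor <;> linarith⟩
      · rcases le_or_gt b 3 with hb' | hb'
        · rcases le_or_gt a 4 with ha' | ha'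
          · exact ⟨(3,2,1), by norm_num, by norm_num; constructor <;> constructor <;> linarith⟩
          · exact ⟨(4,2,1), by norm_num, by norm_num; constructor <;> constructor <;> linarith⟩
        · exact ⟨(3,3,2), by norm_num, by norm_num; constructor <;> constructor <;> linarith⟩

lemma D8_prime : IsPrimeDissection 5 D8 := by
  refine ⟨⟨?_, D8_cover, D8_disjoint⟩, ?_⟩
  · decide
  · decide

theorem f_five_eq_eight :
    (∃ D : Finset (ℕ × ℕ × ℕ), IsPrimeDissection 5 D ∧ D.card = 8) ∧
    (∀ D : Finset (ℕ × ℕ × ℕ), IsPrimeDissection 5 D → 8 ≤ D.card) := by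
  exact ⟨⟨D8, D8_prime, by decide⟩, fun D h => lower_bound h⟩
end

section
/- f(6) = 9 and f(7) = 9: for n = 6 and n = 7, the n×n square admits a prime dissection into exactly 9 integer-sided squares, and admits no prime dissection into fewer than 9 squares. -/
/-! ### Combinatorial (ℕ-level) counterpart of dissections -/

/-- `q` covers the unit cell `c` (cell with lower-left corner `c`). -/
def covers (q : ℕ × ℕ × ℕ) (c : ℕ × ℕ) : Prop :=
  q.1 ≤ c.1 ∧ c.1 < q.1 + q.2.2 ∧ q.2.1 ≤ c.2 ∧ c.2 < q.2.1 + q.2.2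

instance (q : ℕ × ℕ × ℕ) (c : ℕ × ℕ) : Decidable (covers q c) := by
  unfold covers; infer_instance

def InBounds (n : ℕ) (q : ℕ × ℕ × ℕ) : Prop :=
  0 < q.2.2 ∧ q.1 + q.2.2 ≤ n ∧ q.2.1 + q.2.2 ≤ n

instance (n : ℕ) (q : ℕ × ℕ × ℕ) : Decidable (InBounds n q) := by
  unfold InBounds; infer_instance

def Overlap (q q' : ℕ × ℕ × ℕ) : Prop :=
  max q.1 q'.1 < min (q.1 + q.2.2) (q'.1 + q'.2.2) ∧
  max q.2.1 q'.2.1 < min (q.2.1 + q.2.2) (q'.2.1 + q'.2.2)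

instance (q q' : ℕ × ℕ × ℕ) : Decidable (Overlap q q') := by
  unfold Overlap; infer_instance

def NatTiling (n : ℕ) (D : Finset (ℕ × ℕ × ℕ)) : Prop :=
  (∀ q ∈ D, InBounds n q) ∧
  (∀ i, i < n → ∀ j, j < n → ∃ q ∈ D, covers q (i, j)) ∧
  (∀ q ∈ D, ∀ q' ∈ D, q ≠ q' → ¬ Overlap q q')

instance (n : ℕ) (D : Finset (ℕ × ℕ × ℕ)) : Decidable (NatTiling n D) := by
  unfold NatTiling; infer_instance

lemma covers_of_both {q q' : ℕ × ℕ × ℕ} {c : ℕ × ℕ}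
    (h : covers q c) (h' : covers q' c) : Overlap q q' := by
  unfold covers at h h'; unfold Overlap; omega

lemma overlap_cell {q q' : ℕ × ℕ × ℕ} (h : Overlap q q') :
    covers q (max q.1 q'.1, max q.2.1 q'.2.1) ∧ covers q' (max q.1 q'.1, max q.2.1 q'.2.1) := by
  unfold Overlap at h; unfold covers; omega

/-! ### Helper lemmas on reals -/

lemma nat_le_of_le_half {a b : ℕ} (h : (a : ℝ) ≤ (b : ℝ) + 1/2) : a ≤ b := by
  by_contra hc
  have : (b : ℝ) + 1 ≤ (a : ℝ) := by exact_mod_cast Nat.succ_le_of_lt (Nat.lt_of_not_le hc)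
  linarith

lemma nat_lt_of_half_le {a b : ℕ} (h : (b : ℝ) + 1/2 ≤ (a : ℝ)) : b < a := by
  by_contra hc
  have : (a : ℝ) ≤ (b : ℝ) := by exact_mod_cast Nat.le_of_not_lt hc
  linarith

lemma center_mem_open {q : ℕ × ℕ × ℕ} {c : ℕ × ℕ} (h : covers q c) :
    ((c.1 : ℝ) + 1/2, (c.2 : ℝ) + 1/2) ∈ openSq q := by
  obtain ⟨h1, h2, h3, h4⟩ := h
  have c1 : (q.1 : ℝ) ≤ c.1 := by exact_mod_cast h1
  have c2 : (c.1 : ℝ) + 1 ≤ (q.1 : ℝ) + q.2.2 := by exact_mod_cast h2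
  have c3 : (q.2.1 : ℝ) ≤ c.2 := by exact_mod_cast h3
  have c4 : (c.2 : ℝ) + 1 ≤ (q.2.1 : ℝ) + q.2.2 := by exact_mod_cast h4
  refine ⟨⟨by linarith, by linarith⟩, ⟨by linarith, by linarith⟩⟩

lemma covers_of_center_mem {q : ℕ × ℕ × ℕ} {c : ℕ × ℕ}
    (h : ((c.1 : ℝ) + 1/2, (c.2 : ℝ) + 1/2) ∈ closedSq q) : covers q c := by
  obtain ⟨⟨h1, h2⟩, h3, h4⟩ := h
  have e2 : ((q.1 + q.2.2 : ℕ) : ℝ) = (q.1 : ℝ) + q.2.2 := by push_cast; ring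
  have e4 : ((q.2.1 + q.2.2 : ℕ) : ℝ) = (q.2.1 : ℝ) + q.2.2 := by push_cast; ring
  exact ⟨nat_le_of_le_half (by linarith), nat_lt_of_half_le (by rw [e2]; linarith),
    nat_le_of_le_half (by linarith), nat_lt_of_half_le (by rw [e4]; linarith)⟩

/-! ### Bridge: `IsDissection` ↔ `NatTiling` -/

lemma isDissection_natTiling {n : ℕ} {D : Finset (ℕ × ℕ × ℕ)}
    (h : IsDissection n D) : NatTiling n D := by
  obtain ⟨hpos, hu, hdisj⟩ := h
  have hsub : ∀ q ∈ D, closedSq q ⊆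
      Set.Icc (0 : ℝ) (n : ℝ) ×ˢ Set.Icc (0 : ℝ) (n : ℝ) := by
    intro q hq
    rw [← hu]
    exact Set.subset_biUnion_of_mem hq
  refine ⟨?_, ?_, ?_⟩
  · intro q hq
    have hc : (((q.1 + q.2.2 : ℕ) : ℝ), ((q.2.1 + q.2.2 : ℕ) : ℝ)) ∈ closedSq q := by
      constructor <;> constructor <;> push_cast <;> simp [le_add_iff_nonneg_right]
    have := hsub q hq hc
    obtain ⟨⟨_, h2⟩, _, h4⟩ := this
    simp only at h2 h4
    exact ⟨hpos q hq, by exact_mod_cast h2, by exact_mod_cast h4⟩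
  · intro i hi j hj
    have hmem : ((i : ℝ) + 1/2, (j : ℝ) + 1/2) ∈
        Set.Icc (0 : ℝ) (n : ℝ) ×ˢ Set.Icc (0 : ℝ) (n : ℝ) := by
      have hi' : (i : ℝ) + 1 ≤ n := by exact_mod_cast Nat.succ_le_of_lt hi
      have hj' : (j : ℝ) + 1 ≤ n := by exact_mod_cast Nat.succ_le_of_lt hj
      have : (0:ℝ) ≤ i := Nat.cast_nonneg i
      have : (0:ℝ) ≤ j := Nat.cast_nonneg j
      refine ⟨⟨by linarith, by linarith⟩, by linarith, by linarith⟩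
    rw [← hu] at hmem
    simp only [Set.mem_iUnion] at hmem
    obtain ⟨q, hq, hmq⟩ := hmem
    exact ⟨q, hq, covers_of_center_mem (c := (i, j)) hmq⟩
  · intro q hq q' hq' hne hov
    obtain ⟨h1, h2⟩ := overlap_cell hov
    have m1 := center_mem_open h1
    have m2 := center_mem_open h2
    have := hdisj q hq q' hq' hne
    exact absurd (Set.mem_inter m1 m2) (by rw [this]; exact Set.notMem_empty _)

lemma natTiling_isDissection {n : ℕ} {D : Finset (ℕ × ℕ × ℕ)} (hn : 0 < n)
    (h : NatTiling n D) : IsDissection n D := by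
  obtain ⟨hb, hcov, hdisj⟩ := h
  refine ⟨fun q hq => (hb q hq).1, ?_, ?_⟩
  · apply Set.Subset.antisymm
    · refine Set.iUnion₂_subset fun q hq => ?_
      obtain ⟨_, hx, hy⟩ := hb q hq
      rintro ⟨a, b⟩ ⟨⟨ha1, ha2⟩, hb1, hb2⟩
      have hx' : (q.1 : ℝ) + q.2.2 ≤ n := by exact_mod_cast hx
      have hy' : (q.2.1 : ℝ) + q.2.2 ≤ n := by exact_mod_cast hy
      have : (0:ℝ) ≤ q.1 := Nat.cast_nonneg _
      have : (0:ℝ) ≤ q.2.1 := Nat.cast_nonneg _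
      exact ⟨⟨by linarith, by linarith⟩, by linarith, by linarith⟩
    · rintro ⟨a, b⟩ ⟨⟨ha1, ha2⟩, hb1, hb2⟩
      set i : ℕ := min ⌊a⌋₊ (n - 1) with hi
      set j : ℕ := min ⌊b⌋₊ (n - 1) with hj
      have hin : i < n := by omega
      have hjn : j < n := by omega
      obtain ⟨q, hq, hqc⟩ := hcov i hin j hjn
      obtain ⟨c1, c2, c3, c4⟩ := hqc
      simp only [Set.mem_iUnion]
      refine ⟨q, hq, ?_, ?_⟩
      · constructor
        · calc (q.1 : ℝ) ≤ i := by exact_mod_cast c1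
            _ ≤ ⌊a⌋₊ := by exact_mod_cast (min_le_left _ _)
            _ ≤ a := Nat.floor_le ha1
        · rcases le_or_gt ⌊a⌋₊ (n-1) with hle | hlt
          · have hieq : i = ⌊a⌋₊ := by omega
            have : a < (⌊a⌋₊ : ℝ) + 1 := Nat.lt_floor_add_one a
            have c2' : (i : ℝ) + 1 ≤ (q.1 : ℝ) + q.2.2 := by exact_mod_cast c2
            rw [hieq] at c2'; linarith
          · have hieq : i = n - 1 := by omega
            have c2' : (i : ℝ) + 1 ≤ (q.1 : ℝ) + q.2.2 := by exact_mod_cast c2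
            have : ((n - 1 : ℕ) : ℝ) + 1 = (n : ℝ) := by
              have : (1:ℕ) ≤ n := hn
              push_cast [Nat.cast_sub this]; ring
            rw [hieq, this] at c2'; linarith
      · constructor
        · calc (q.2.1 : ℝ) ≤ j := by exact_mod_cast c3
            _ ≤ ⌊b⌋₊ := by exact_mod_cast (min_le_left _ _)
            _ ≤ b := Nat.floor_le hb1
        · rcases le_or_gt ⌊b⌋₊ (n-1) with hle | hlt
          · have hjeq : j = ⌊b⌋₊ := by omega
            have : b < (⌊b⌋₊ : ℝ) + 1 := Nat.lt_floor_add_one b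
            have c4' : (j : ℝ) + 1 ≤ (q.2.1 : ℝ) + q.2.2 := by exact_mod_cast c4
            rw [hjeq] at c4'; linarith
          · have hjeq : j = n - 1 := by omega
            have c4' : (j : ℝ) + 1 ≤ (q.2.1 : ℝ) + q.2.2 := by exact_mod_cast c4
            have : ((n - 1 : ℕ) : ℝ) + 1 = (n : ℝ) := by
              have : (1:ℕ) ≤ n := hn
              push_cast [Nat.cast_sub this]; ring
            rw [hjeq, this] at c4'; linarith
  · intro q hq q' hq' hne
    by_contra hne'
    obtain ⟨⟨a, b⟩, ⟨⟨p1, p2⟩, p3, p4⟩, ⟨p5, p6⟩, p7, p8⟩ :=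
      Set.nonempty_iff_ne_empty.mpr hne'
    apply hdisj q hq q' hq' hne
    have A1 : q.1 < q'.1 + q'.2.2 := by
      have : (q.1:ℝ) < (q'.1:ℝ) + q'.2.2 := lt_trans p1 p6
      exact_mod_cast this
    have A2 : q'.1 < q.1 + q.2.2 := by
      have : (q'.1:ℝ) < (q.1:ℝ) + q.2.2 := lt_trans p5 p2
      exact_mod_cast this
    have A3 : q.1 < q.1 + q.2.2 := by
      have : (q.1:ℝ) < (q.1:ℝ) + q.2.2 := lt_trans p1 p2
      exact_mod_cast this
    have A4 : q'.1 < q'.1 + q'.2.2 := by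
      have : (q'.1:ℝ) < (q'.1:ℝ) + q'.2.2 := lt_trans p5 p6
      exact_mod_cast this
    have B1 : q.2.1 < q'.2.1 + q'.2.2 := by
      have : (q.2.1:ℝ) < (q'.2.1:ℝ) + q'.2.2 := lt_trans p3 p8
      exact_mod_cast this
    have B2 : q'.2.1 < q.2.1 + q.2.2 := by
      have : (q'.2.1:ℝ) < (q.2.1:ℝ) + q.2.2 := lt_trans p7 p4
      exact_mod_cast this
    have B3 : q.2.1 < q.2.1 + q.2.2 := by
      have : (q.2.1:ℝ) < (q.2.1:ℝ) + q.2.2 := lt_trans p3 p4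
      exact_mod_cast this
    have B4 : q'.2.1 < q'.2.1 + q'.2.2 := by
      have : (q'.2.1:ℝ) < (q'.2.1:ℝ) + q'.2.2 := lt_trans p7 p8
      exact_mod_cast this
    exact ⟨by omega, by omega⟩

/-! ### Canonical search for the lower bound -/

def coversB (q : ℕ × ℕ × ℕ) (c : ℕ × ℕ) : Bool := decide (covers q c)

def cellsOf (q : ℕ × ℕ × ℕ) : List (ℕ × ℕ) :=
  (List.range q.2.2).flatMap fun dj => (List.range q.2.2).map fun di => (q.1 + di, q.2.1 + dj)

lemma mem_cellsOf {q : ℕ × ℕ × ℕ} {c : ℕ × ℕ} : c ∈ cellsOf q ↔ covers q c := by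
  unfold cellsOf covers
  simp only [List.mem_flatMap, List.mem_map, List.mem_range, Prod.ext_iff]
  constructor
  · rintro ⟨dj, hdj, di, hdi, h1, h2⟩; omega
  · rintro ⟨h1, h2, h3, h4⟩
    exact ⟨c.2 - q.2.1, by omega, c.1 - q.1, by omega, by omega, by omega⟩

def search (n : ℕ) : ℕ → ℕ → List (ℕ × ℕ) → Bool
  | g, _, [] => g != 1
  | _, 0, _ :: _ => true
  | g, b+1, c :: rest =>
      (List.range' 1 n).all fun s =>
        !((cellsOf (c.1, c.2, s)).all fun d => (c :: rest).contains d) ||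
          search n (Nat.gcd g s) b ((c :: rest).filter fun d => !(coversB (c.1, c.2, s) d))

def allCells (n : ℕ) : List (ℕ × ℕ) :=
  (List.range n).flatMap fun j => (List.range n).map fun i => (i, j)

lemma mem_allCells {n : ℕ} {c : ℕ × ℕ} : c ∈ allCells n ↔ c.1 < n ∧ c.2 < n := by
  unfold allCells
  simp only [List.mem_flatMap, List.mem_map, List.mem_range, Prod.ext_iff]
  constructor
  · rintro ⟨j, hj, i, hi, h1, h2⟩; omega
  · rintro ⟨h1, h2⟩; exact ⟨c.2, h2, c.1, h1, rfl, rfl⟩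

def cellKey (n : ℕ) (c : ℕ × ℕ) : ℕ := c.2 * n + c.1

lemma search_sound (n : ℕ) : ∀ (b g : ℕ) (l : List (ℕ × ℕ)) (T : Finset (ℕ × ℕ × ℕ)),
    (∀ q ∈ T, InBounds n q) →
    (∀ q ∈ T, ∀ q' ∈ T, q ≠ q' → ¬ Overlap q q') →
    (∀ c : ℕ × ℕ, c ∈ l ↔ ∃ q ∈ T, covers q c) →
    l.Pairwise (fun a b => cellKey n a < cellKey n b) →
    T.card ≤ b →
    search n g b l = true →
    Nat.gcd g (T.gcd (fun q => q.2.2)) ≠ 1 := by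
  have base : ∀ (b g : ℕ) (T : Finset (ℕ × ℕ × ℕ)),
      (∀ q ∈ T, InBounds n q) →
      (∀ c : ℕ × ℕ, c ∈ ([] : List (ℕ × ℕ)) ↔ ∃ q ∈ T, covers q c) →
      search n g b [] = true →
      Nat.gcd g (T.gcd (fun q => q.2.2)) ≠ 1 := by
    intro b g T hb hcov hs
    have hT : T = ∅ := by
      rw [Finset.eq_empty_iff_forall_notMem]
      intro q hq
      have hcv : covers q (q.1, q.2.1) := by
        have := hb q hq; unfold InBounds at this; unfold covers; omega
      have : (q.1, q.2.1) ∈ ([] : List (ℕ × ℕ)) := (hcov _).mpr ⟨q, hq, hcv⟩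
      simp at this
    subst hT
    simp only [Finset.gcd_empty, Nat.gcd_zero_right]
    cases b <;> simpa [search] using hs
  intro b
  induction b with
  | zero =>
    intro g l T hb hov hcov hsort hcard hs
    cases l with
    | nil => exact base 0 g T hb hcov hs
    | cons c rest =>
      obtain ⟨q, hq, _⟩ := (hcov c).mp List.mem_cons_self
      have : 0 < T.card := Finset.card_pos.mpr ⟨q, hq⟩
      omega
  | succ b ih =>
    intro g l T hb hov hcov hsort hcard hs
    cases l with
    | nil => exact base (b+1) g T hb hcov hs
    | cons c rest =>
      -- the square covering the head cell has its corner at the head cell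
      obtain ⟨q, hq, hqc⟩ := (hcov c).mp List.mem_cons_self
      have hbq := hb q hq
      have hcorner : covers q (q.1, q.2.1) := by
        unfold InBounds at hbq; unfold covers; omega
      have hcl : (q.1, q.2.1) ∈ c :: rest := (hcov _).mpr ⟨q, hq, hcorner⟩
      have hqeq : q.1 = c.1 ∧ q.2.1 = c.2 := by
        rcases List.mem_cons.mp hcl with heq | hmem
        · exact ⟨congrArg Prod.fst heq, congrArg Prod.snd heq⟩
        · exfalso
          have hkey : cellKey n c < cellKey n (q.1, q.2.1) :=
            (List.pairwise_cons.mp hsort).1 _ hmem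
          unfold cellKey at hkey
          obtain ⟨c1, c2, c3, c4⟩ := hqc
          obtain ⟨_, hx, hy⟩ := hbq
          simp only at hkey
          -- q.2.1 ≤ c.2, q.1 ≤ c.1, coordinates < n
          have hc1n : q.1 < n := by omega
          nlinarith [Nat.mul_le_mul_right n c3]
      set s := q.2.2 with hs'
      have hmemr : s ∈ List.range' 1 n := by
        rw [List.mem_range'_1]
        unfold InBounds at hbq; omega
      rw [show search n g (b+1) (c :: rest) = _ from rfl] at hs
      have hall := List.all_eq_true.mp hs s hmemr
      have hqq : q = (c.1, c.2, s) := by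
        obtain ⟨e1, e2⟩ := hqeq
        exact Prod.ext e1 (Prod.ext e2 rfl)
      have hfits : ((cellsOf (c.1, c.2, s)).all fun d => (c :: rest).contains d) = true := by
        rw [List.all_eq_true]
        intro d hd
        have : covers q d := by rw [hqq]; exact mem_cellsOf.mp hd
        have : d ∈ c :: rest := (hcov d).mpr ⟨q, hq, this⟩
        exact List.elem_eq_true_of_mem this
      rw [hfits] at hall
      simp only [Bool.not_true, Bool.false_or] at hall
      -- set up recursive invariants for T' = T.erase q
      set T' := T.erase q with hT'
      set l' := (c :: rest).filter (fun d => !(coversB (c.1, c.2, s) d)) with hl'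
      have hcov' : ∀ d : ℕ × ℕ, d ∈ l' ↔ ∃ q' ∈ T', covers q' d := by
        intro d
        rw [hl', List.mem_filter]
        constructor
        · rintro ⟨hdl, hnc⟩
          obtain ⟨q', hq', hcq'⟩ := (hcov d).mp hdl
          have hne : q' ≠ q := by
            rintro rfl
            rw [hqq] at hcq'
            simp [coversB, hcq'] at hnc
          exact ⟨q', Finset.mem_erase.mpr ⟨hne, hq'⟩, hcq'⟩
        · rintro ⟨q', hq', hcq'⟩
          obtain ⟨hne, hq'T⟩ := Finset.mem_erase.mp hq'
          refine ⟨(hcov d).mpr ⟨q', hq'T, hcq'⟩, ?_⟩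
          simp only [Bool.not_eq_true', coversB, decide_eq_false_iff_not]
          intro hcq
          rw [← hqq] at hcq
          exact hov q' hq'T q hq hne (covers_of_both hcq' hcq)
      have hsort' : l'.Pairwise (fun a b => cellKey n a < cellKey n b) :=
        hsort.sublist List.filter_sublist
      have hcard' : T'.card ≤ b := by
        have h2 : T'.card = T.card - 1 := Finset.card_erase_of_mem hq
        have h1 : 0 < T.card := Finset.card_pos.mpr ⟨q, hq⟩
        omega
      have hrec := ih (Nat.gcd g s) l' T'
        (fun q' hq' => hb q' (Finset.mem_of_mem_erase hq'))
        (fun a ha a' ha' => hov a (Finset.mem_of_mem_erase ha) a' (Finset.mem_of_mem_erase ha'))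
        hcov' hsort' hcard' hall
      intro hone
      apply hrec
      have hins : T = insert q T' := (Finset.insert_erase hq).symm
      rw [hins, Finset.gcd_insert] at hone
      have hgg : gcd q.2.2 (T'.gcd fun q => q.2.2) = Nat.gcd s (T'.gcd fun q => q.2.2) := rfl
      rw [hgg] at hone
      rw [Nat.gcd_assoc]
      exact hone
      

lemma natTiling_card {n : ℕ} (hs : search n 0 8 (allCells n) = true)
    (hsort : (allCells n).Pairwise (fun a b => cellKey n a < cellKey n b))
    {D : Finset (ℕ × ℕ × ℕ)} (h : NatTiling n D)
    (hg : D.gcd (fun q => q.2.2) = 1) : 9 ≤ D.card := by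
  by_contra h8
  refine search_sound n 8 0 (allCells n) D h.1 h.2.2 ?_ hsort (by omega) hs ?_
  · intro c
    rw [mem_allCells]
    constructor
    · rintro ⟨h1, h2⟩
      obtain ⟨q, hq, hc⟩ := h.2.1 c.1 h1 c.2 h2
      exact ⟨q, hq, by simpa using hc⟩
    · rintro ⟨q, hq, hc⟩
      have := h.1 q hq
      unfold InBounds at this; unfold covers at hc; omega
  · rw [Nat.gcd_zero_left]; exact hg

def D6 : Finset (ℕ × ℕ × ℕ) :=
  {(0,0,4),(4,0,2),(4,2,2),(4,4,2),(0,4,2),(2,4,1),(3,4,1),(2,5,1),(3,5,1)}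

def D7 : Finset (ℕ × ℕ × ℕ) :=
  {(0,0,4),(4,0,3),(4,3,2),(6,3,1),(0,4,3),(3,4,1),(6,4,1),(3,5,2),(5,5,2)}

lemma gcd_eq_one_of_one_mem {D : Finset (ℕ × ℕ × ℕ)} {q : ℕ × ℕ × ℕ}
    (hq : q ∈ D) (h1 : q.2.2 = 1) : D.gcd (fun q => q.2.2) = 1 := by
  have := Finset.gcd_dvd (f := fun q : ℕ × ℕ × ℕ => q.2.2) hq
  simp only [h1] at this
  exact Nat.dvd_one.mp this

set_option maxHeartbeats 4000000 in
lemma search6 : search 6 0 8 (allCells 6) = true := by decide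

set_option maxHeartbeats 4000000 in
lemma search7 : search 7 0 8 (allCells 7) = true := by decide

theorem f_six_and_seven_eq_nine :
    ((∃ D : Finset (ℕ × ℕ × ℕ), IsPrimeDissection 6 D ∧ D.card = 9) ∧
      (∀ D : Finset (ℕ × ℕ × ℕ), IsPrimeDissection 6 D → 9 ≤ D.card)) ∧
    ((∃ D : Finset (ℕ × ℕ × ℕ), IsPrimeDissection 7 D ∧ D.card = 9) ∧
      (∀ D : Finset (ℕ × ℕ × ℕ), IsPrimeDissection 7 D → 9 ≤ D.card)) := by
  refine ⟨⟨⟨D6, ⟨?_, ?_⟩, by decide⟩, ?_⟩, ⟨⟨D7, ⟨?_, ?_⟩, by decide⟩, ?_⟩⟩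
  · exact natTiling_isDissection (by norm_num) (by decide)
  · exact gcd_eq_one_of_one_mem (q := (2,4,1)) (by decide) rfl
  · rintro D ⟨hd, hg⟩
    exact natTiling_card search6 (by decide) (isDissection_natTiling hd) hg
  · exact natTiling_isDissection (by norm_num) (by decide)
  · exact gcd_eq_one_of_one_mem (q := (6,3,1)) (by decide) rfl
  · rintro D ⟨hd, hg⟩
    exact natTiling_card search7 (by decide) (isDissection_natTiling hd) hg
end
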